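/- arXiv:2401.00509 — 2 statements merged into one kernel-verified Lean document; each statement's English description precedes it below -/
import Mathlib

section
/- Let θ be a continuous partial action of a topological group G on a topological space X such that the domain G*X is open in G×X (a nice partial action). Then ι : X → X_G, x ↦ [e,x], is an open topological embedding, where X_G carries the quotient topology. -/
/-- A set-theoretic partial action of a group `G` on a set `X`, encoded by a
domain predicate `dom g x` (meaning "`g • x` is defined") and a total map `act`
whose values are only relevant on the domain; axioms (PA1)-(PA3). -/
structure SetPartialAction (G : Type*) (X : Type*) [Group G] where
  dom : G → X → Prop
  act : G → X → X
  dom_one : ∀ x, dom 1 x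
  act_one : ∀ x, act 1 x = x
  dom_inv : ∀ g x, dom g x → dom g⁻¹ (act g x)
  act_inv : ∀ g x, dom g x → act g⁻¹ (act g x) = x
  dom_mul : ∀ g h x, dom h x → dom g (act h x) → dom (g * h) x
  act_mul : ∀ g h x, dom h x → dom g (act h x) → act g (act h x) = act (g * h) x

/-- The enveloping relation on `G × X`: `(g,x) R (h,y)` iff `x ∈ X_{g⁻¹h}`
(i.e. `θ_{h⁻¹g}` is defined at `x`) and `θ_{h⁻¹g}(x) = y`. -/
def envRel {G X : Type*} [Group G] (θ : SetPartialAction G X) :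
    (G × X) → (G × X) → Prop :=
  fun p q => θ.dom (q.1⁻¹ * p.1) p.2 ∧ θ.act (q.1⁻¹ * p.1) p.2 = q.2

/-- A topological partial action: each domain X_g is open and each θ_g is a
homeomorphism of X_{g⁻¹} onto X_g (encoded by continuity of act g on its domain,
the inverse being act g⁻¹). -/
structure TopPartialAction (G X : Type*) [Group G] [TopologicalSpace G]
    [TopologicalSpace X] extends SetPartialAction G X where
  isOpen_dom : ∀ g, IsOpen {x | dom g x}
  continuousOn_act : ∀ g, ContinuousOn (act g) {x | dom g x}

theorem envRel_equiv {G X : Type*} [Group G] (θ : SetPartialAction G X) :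
    Equivalence (envRel θ) := by
  constructor
  · intro p
    refine ⟨by simpa using θ.dom_one p.2, by simpa using θ.act_one p.2⟩
  · rintro ⟨g, x⟩ ⟨h, y⟩ ⟨hd, he⟩
    have h1 := θ.dom_inv _ _ hd
    have h2 := θ.act_inv _ _ hd
    rw [he] at h1 h2
    simp only [mul_inv_rev, inv_inv] at h1 h2
    exact ⟨h1, h2⟩
  · rintro ⟨g, x⟩ ⟨h, y⟩ ⟨k, z⟩ ⟨hd1, he1⟩ ⟨hd2, he2⟩
    rw [← he1] at hd2 he2
    have hd := θ.dom_mul _ _ _ hd1 hd2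
    have he := θ.act_mul _ _ _ hd1 hd2
    rw [he2] at he
    have : (k⁻¹ * h) * (h⁻¹ * g) = k⁻¹ * g := by group
    rw [this] at hd he
    exact ⟨hd, he.symm⟩

/-- For a nice partial action (continuous, with open graph domain G*X) of a
Hausdorff topological group, ι : X → X_G, x ↦ [e,x], is an open embedding,
where X_G carries the quotient topology. -/
theorem stmt5 {G X : Type*} [Group G] [TopologicalSpace G] [IsTopologicalGroup G]
    [T2Space G] [TopologicalSpace X] (θ : TopPartialAction G X)
    (hcont : ContinuousOn (fun p : G × X => θ.act p.1 p.2) {p : G × X | θ.dom p.1 p.2})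
    (hopen : IsOpen {p : G × X | θ.dom p.1 p.2}) :
    Topology.IsOpenEmbedding
      (fun x : X => Quot.mk (envRel θ.toSetPartialAction) (1, x)) := by
  have heq := envRel_equiv θ.toSetPartialAction
  have key : ∀ p q, Quot.mk (envRel θ.toSetPartialAction) p =
      Quot.mk (envRel θ.toSetPartialAction) q ↔ envRel θ.toSetPartialAction p q := by
    intro p q
    rw [Quot.eq, Equivalence.eqvGen_iff heq]
  apply Topology.IsOpenEmbedding.of_continuous_injective_isOpenMap
  · exact continuous_quot_mk.comp (Continuous.prodMk_right 1)
  · intro x y hxy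
    have := (key _ _).mp hxy
    obtain ⟨-, he⟩ := this
    simpa [θ.act_one] using he
  · intro U hU
    rw [isOpen_coinduced]
    have hset : Quot.mk (envRel θ.toSetPartialAction) ⁻¹'
        ((fun x : X => Quot.mk (envRel θ.toSetPartialAction) (1, x)) '' U) =
        {p : G × X | θ.dom p.1 p.2} ∩ (fun p : G × X => θ.act p.1 p.2) ⁻¹' U := by
      ext ⟨g, x⟩
      simp only [Set.mem_preimage, Set.mem_image, Set.mem_inter_iff, Set.mem_setOf_eq]
      constructor
      · rintro ⟨u, hu, hq⟩
        obtain ⟨hd, he⟩ := (key _ _).mp hq.symm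
        simp only [inv_one, one_mul] at hd he
        exact ⟨hd, by rwa [he]⟩
      · rintro ⟨hd, hu⟩
        refine ⟨θ.act g x, hu, ((key _ _).mpr ?_).symm⟩
        exact ⟨by simpa using hd, by simp⟩
    rw [hset]
    exact hcont.isOpen_inter_preimage hopen hU
end

section
/- Let K be a subgroup of a topological group G and θ a topological partial action of K on a Hausdorff space X. If for some x ∈ X the set K^x = {k ∈ K : θ(k,x) is defined} is closed in G, then for every g ∈ G the fiber p_K⁻¹(p_K(g,x)) = {(gk⁻¹, θ(k,x)) : k ∈ K^x} is closed in G × X. Consequently, if K^x is closed for every x, the twisted product G×_K X is a T₁ space. -/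
open Topology Filter


/-- The twisted-product relation on G × X for a partial action θ of a subgroup
K ≤ G on X: (g,x) ~ (g k⁻¹, θ_k x) for k ∈ K with θ_k x defined.  The twisted
product G ×_K X is the quotient Quot (twRel K θ). -/
def twRel {G X : Type*} [Group G] (K : Subgroup G) (θ : SetPartialAction K X) :
    (G × X) → (G × X) → Prop :=
  fun p q => ∃ k : K, θ.dom k p.2 ∧ q = (p.1 * (k : G)⁻¹, θ.act k p.2)

theorem twRel_equivalence {G X : Type*} [Group G] (K : Subgroup G)
    (θ : SetPartialAction K X) : Equivalence (twRel K θ) := by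
  constructor
  · intro p
    exact ⟨1, θ.dom_one p.2, by simp [θ.act_one]⟩
  · rintro p q ⟨k, hk, rfl⟩
    refine ⟨k⁻¹, θ.dom_inv k p.2 hk, ?_⟩
    simp [θ.act_inv k p.2 hk, mul_assoc]
  · rintro p q s ⟨k, hk, rfl⟩ ⟨l, hl, rfl⟩
    refine ⟨l * k, θ.dom_mul l k p.2 hk hl, ?_⟩
    simp [θ.act_mul l k p.2 hk hl, mul_assoc]



/-- Let θ be a continuous topological partial action of K ≤ G on a Hausdorff
space X.  (i) If K^x = {k ∈ K : θ(k,x) defined} is closed in G for some x, then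
for every g the fiber p_K⁻¹(p_K(g,x)) = {(gk⁻¹, θ(k,x)) : k ∈ K^x} is closed in
G × X.  (ii) If K^x is closed in G for every x, the twisted product G ×_K X
is T₁. -/
theorem stmt17 {G X : Type*} [Group G] [TopologicalSpace G] [IsTopologicalGroup G]
    [T2Space G] [TopologicalSpace X] [T2Space X]
    (K : Subgroup G) (θ : TopPartialAction K X)
    (hcont : ContinuousOn (fun p : K × X => θ.act p.1 p.2) {p : K × X | θ.dom p.1 p.2}) :
    (∀ x : X, IsClosed {g : G | ∃ k : K, (k : G) = g ∧ θ.dom k x} →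
      ∀ g : G, IsClosed {q : G × X | twRel K θ.toSetPartialAction (g, x) q}) ∧
    ((∀ x : X, IsClosed {g : G | ∃ k : K, (k : G) = g ∧ θ.dom k x}) →
      T1Space (Quot (twRel K θ.toSetPartialAction))) := by
  have main : ∀ x : X, IsClosed {g : G | ∃ k : K, (k : G) = g ∧ θ.dom k x} →
      ∀ g : G, IsClosed {q : G × X | twRel K θ.toSetPartialAction (g, x) q} := by
    intro x hC g
    set C : Set G := {g' : G | ∃ k : K, (k : G) = g' ∧ θ.dom k x} with hCdef
    set F : Set (G × X) := {q : G × X | twRel K θ.toSetPartialAction (g, x) q} with hFdef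
    set D : Set (K × X) := {p : K × X | θ.dom p.1 p.2} with hDdef
    refine isClosed_of_closure_subset ?_
    intro p hp
    have hL : (𝓝[F] p).NeBot := mem_closure_iff_nhdsWithin_neBot.mp hp
    -- the key map κ q = q.1⁻¹ * g
    have hκ : Filter.Tendsto (fun q : G × X => q.1⁻¹ * g) (𝓝[F] p) (𝓝 (p.1⁻¹ * g)) := by
      exact ((continuous_fst.inv.mul continuous_const).tendsto p).mono_left nhdsWithin_le_nhds
    have hmemF : ∀ᶠ q in 𝓝[F] p, q ∈ F := eventually_mem_nhdsWithin
    have hevC : ∀ᶠ q in 𝓝[F] p, q.1⁻¹ * g ∈ C := by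
      filter_upwards [hmemF] with q hq
      obtain ⟨k, hk, rfl⟩ := hq
      exact ⟨k, by simp, hk⟩
    have hpC : p.1⁻¹ * g ∈ C := hC.mem_of_tendsto hκ hevC
    obtain ⟨k₀, hk₀eq, hk₀dom⟩ := hpC
    -- define φ into K × X
    have hKmem : ∀ q : G × X, q ∈ F → q.1⁻¹ * g ∈ K := by
      rintro q ⟨k, hk, rfl⟩
      simpa using k.2
    classical
    set φ : G × X → K × X := fun q =>
      (if h : q.1⁻¹ * g ∈ K then (⟨q.1⁻¹ * g, h⟩ : K) else 1, x) with hφdef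
    have hφF : ∀ q : G × X, ∀ hq : q ∈ F, φ q = ((⟨q.1⁻¹ * g, hKmem q hq⟩ : K), x) := by
      intro q hq
      simp only [hφdef, dif_pos (hKmem q hq)]
    have hφk : ∀ q : G × X, q ∈ F → ∀ k : K, θ.dom k x →
        q = (g * (k : G)⁻¹, θ.act k x) → φ q = (k, x) := by
      intro q hq k hk hqeq
      rw [hφF q hq]
      refine Prod.ext (Subtype.ext ?_) rfl
      show q.1⁻¹ * g = (k : G)
      rw [hqeq]
      simp
    have hφtends : Filter.Tendsto φ (𝓝[F] p) (𝓝[D] (k₀, x)) := by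
      rw [tendsto_nhdsWithin_iff]
      constructor
      · refine Filter.Tendsto.prodMk_nhds ?_ tendsto_const_nhds
        rw [IsEmbedding.subtypeVal.tendsto_nhds_iff, hk₀eq]
        refine Filter.Tendsto.congr' ?_ hκ
        filter_upwards [hmemF] with q hq
        simp only [Function.comp_apply, dif_pos (hKmem q hq)]
      · filter_upwards [hmemF] with q hq
        obtain ⟨k, hk, hqeq⟩ := hq
        rw [hφk q ⟨k, hk, hqeq⟩ k hk hqeq]
        exact hk
    have hcw := (hcont (k₀, x) hk₀dom).tendsto.comp hφtends
    have hsnd : Filter.Tendsto (fun q : G × X => q.2) (𝓝[F] p)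
        (𝓝 (θ.act k₀ x)) := by
      refine hcw.congr' ?_
      filter_upwards [hmemF] with q hq
      obtain ⟨k, hk, hqeq⟩ := hq
      have h1 : φ q = (k, x) := hφk q ⟨k, hk, hqeq⟩ k hk hqeq
      rw [Function.comp_apply, h1, hqeq]
    have hsnd' : Filter.Tendsto (fun q : G × X => q.2) (𝓝[F] p) (𝓝 p.2) :=
      (continuous_snd.tendsto p).mono_left nhdsWithin_le_nhds
    have hy : p.2 = θ.act k₀ x := tendsto_nhds_unique hsnd' hsnd
    refine ⟨k₀, hk₀dom, ?_⟩
    refine Prod.ext ?_ hy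
    have : (k₀ : G) = p.1⁻¹ * g := hk₀eq
    simp only [this]
    group
  refine ⟨main, fun hall => ?_⟩
  set r := twRel K θ.toSetPartialAction with hr
  have hequiv := twRel_equivalence K θ.toSetPartialAction
  refine ⟨fun a => ?_⟩
  obtain ⟨⟨g, x⟩⟩ := a
  rw [← isQuotientMap_quot_mk.isClosed_preimage]
  have : Quot.mk r ⁻¹' {Quot.mk r (g, x)} = {q : G × X | r (g, x) q} := by
    ext q
    simp only [Set.mem_preimage, Set.mem_singleton_iff, Set.mem_setOf_eq]
    rw [Quot.eq]
    constructor
    · intro h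
      exact hequiv.symm ((Equivalence.eqvGen_iff hequiv).mp h)
    · intro h
      exact (Equivalence.eqvGen_iff hequiv).mpr (hequiv.symm h)
  rw [this]
  exact main x (hall x) g
end
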